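/- Let q(z) = (1/|a|²) Σ' (f_{i,j,m}(z)²/(d_{i,j} d_{j,m} d_{m,i})) v_{i,j}, where m ∈ {1,…,n} is fixed and Σ' is over pairs i < j with m ∉ {i,j}. Then for every z ∈ ℂ^n with f_{i,j,k}(z) ≠ 0 for all triples of distinct indices, and for every ℓ ∈ {1,…,n}: (|a|/2) ∂q/∂z_ℓ (z) = K_ℓ(z) q(z). Thus q is a flat section of the Gauss–Manin connection at parameter κ = |a|/2, spanning a one-dimensional invariant subbundle (the bundle of conformal blocks at level |a|/2). -/

import Mathlib

/-!
Writing `q` as a sum over all ordered pairs, the cyclic sum `x_{l,j} + x_{j,k} + x_{k,l}` seen by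
`L_{l,j,k}` picks out `c_{l,j} + c_{j,k} + c_{k,l}` from the coefficients
`c_{i,j} = f_{i,j,m}² / (d_{i,j} d_{j,m} d_{m,i})`, and a three-term identity turns this into
`f_{l,j,k}² / (d_{l,j} d_{j,k} d_{k,l})`. Hence `K_l q` is, up to `(2|a|²)⁻¹`, the sum over `j, k` of
`ψ_{j,k} (a_k F_{l,j} + a_l F_{j,k} + a_j F_{k,l})` with `ψ_{j,k} = f_{l,j,k} / (d_{l,j} d_{k,l})`.
For any `p ≠ l` the Plücker relation gives `ψ_{j,k} = φ_j - φ_k` with `φ_j = ψ_{j,p}`. Since the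
`v_{i,j}` are antisymmetric with vanishing row sums, this sum and `∂q/∂z_l` both collapse to
multiples of `∑_j φ_j v_{l,j}` (for `l ≠ m` take `p = m`; for `l = m`, `∂q/∂z_m` has
coefficients `ψ_{i,j}` themselves). Degenerate index configurations are absorbed by `x / 0 = 0`.
-/

open Finset

/-- `d_{i,j} = b_i^1 b_j^2 − b_i^2 b_j^1`. -/
def dd2 {n : ℕ} (b : Fin n → Fin 2 → ℂ) (i j : Fin n) : ℂ :=
  b i 0 * b j 1 - b i 1 * b j 0

/-- `f_{i,j,k}(z) = d_{j,k} z_i + d_{k,i} z_j + d_{i,j} z_k`. -/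
def ff2 {n : ℕ} (b : Fin n → Fin 2 → ℂ) (z : Fin n → ℂ) (i j k : Fin n) : ℂ :=
  dd2 b j k * z i + dd2 b k i * z j + dd2 b i j * z k

/-- The basis vector `F_{i,j}` of `V` in the coordinate model: an element of
`Fin n → Fin n → ℂ` whose `(i,j)` entry is `1` and `(j,i)` entry is `-1`.
This realizes the relations `F_{j,i} = -F_{i,j}` and `F_{i,i} = 0`. -/
def F2 (n : ℕ) (i j : Fin n) : Fin n → Fin n → ℂ :=
  fun k l => (if k = i ∧ l = j then 1 else 0) - (if k = j ∧ l = i then 1 else 0)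

/-- The space `V` spanned by the `F_{i,j}`: antisymmetric coefficient arrays. -/
noncomputable def skewV2 (n : ℕ) : Submodule ℂ (Fin n → Fin n → ℂ) where
  carrier := {x | ∀ i j, x j i = -x i j}
  add_mem' := by
    intro x y hx hy i j
    simp only [Pi.add_apply, hx i j, hy i j]
    ring
  zero_mem' := by
    intro i j
    simp
  smul_mem' := by
    intro c x hx i j
    simp only [Pi.smul_apply, smul_eq_mul, hx i j]
    ring

/-- The subspace `Sing V ⊆ V` of singular vectors:
`{∑_{i<j} c_{i,j} F_{i,j} : ∑_{j<i} a_j c_{j,i} − ∑_{j>i} a_j c_{i,j} = 0 for every i}`. -/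
noncomputable def singV2 (n : ℕ) (a : Fin n → ℂ) : Submodule ℂ (Fin n → Fin n → ℂ) where
  carrier := {x | (∀ i j, x j i = -x i j) ∧ ∀ i,
    (∑ j ∈ Finset.univ.filter (fun j => j < i), a j * x j i) -
      (∑ j ∈ Finset.univ.filter (fun j => i < j), a j * x i j) = 0}
  add_mem' := by
    intro x y hx hy
    refine ⟨fun i j => ?_, fun i => ?_⟩
    · simp only [Pi.add_apply, hx.1 i j, hy.1 i j]; ring
    · have h1 := hx.2 i
      have h2 := hy.2 i
      simp only [Pi.add_apply, mul_add, Finset.sum_add_distrib]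
      linear_combination h1 + h2
  zero_mem' := by
    constructor
    · intro i j; simp
    · intro i; simp
  smul_mem' := by
    intro c x hx
    refine ⟨fun i j => ?_, fun i => ?_⟩
    · simp only [Pi.smul_apply, smul_eq_mul, hx.1 i j]; ring
    · have h := hx.2 i
      simp only [Pi.smul_apply, smul_eq_mul]
      have e1 : ∑ j ∈ Finset.univ.filter (fun j => j < i), a j * (c * x j i) =
          c * ∑ j ∈ Finset.univ.filter (fun j => j < i), a j * x j i := by
        rw [Finset.mul_sum]; exact Finset.sum_congr rfl fun j _ => by ring
      have e2 : ∑ j ∈ Finset.univ.filter (fun j => i < j), a j * (c * x i j) =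
          c * ∑ j ∈ Finset.univ.filter (fun j => i < j), a j * x i j := by
        rw [Finset.mul_sum]; exact Finset.sum_congr rfl fun j _ => by ring
      rw [e1, e2]
      linear_combination c * h

/-- The vector `v_{i,j} = F_{i,j} − (a_j/|a|) ∑_k F_{i,k} − (a_i/|a|) ∑_ℓ F_{ℓ,j}`
(for `i ≠ j`), and `v_{i,i} = 0`. -/
noncomputable def vv2 {n : ℕ} (a : Fin n → ℂ) (i j : Fin n) : Fin n → Fin n → ℂ :=
  if i = j then 0 else
    F2 n i j - (a j / ∑ m, a m) • (∑ k, F2 n i k) - (a i / ∑ m, a m) • (∑ l, F2 n l j)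

/-- The contravariant form `S^{(a)}` with `S^{(a)}(F_{i,j}, F_{i,j}) = a_i a_j` for `i < j`
and distinct basis vectors orthogonal, written on coordinates. -/
noncomputable def S2 {n : ℕ} (a : Fin n → ℂ) (x y : Fin n → Fin n → ℂ) : ℂ :=
  ∑ i, ∑ j ∈ Finset.univ.filter (fun j => i < j), a i * a j * x i j * y i j

/-- The operator `L_{i,j,k}` sending each of `F_{i,j}, F_{j,k}, F_{k,i}` to
`a_k F_{i,j} + a_i F_{j,k} + a_j F_{k,i}` and killing `F_{ℓ,m}` with `{ℓ,m} ⊄ {i,j,k}`. -/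
noncomputable def L2 {n : ℕ} (a : Fin n → ℂ) (i j k : Fin n) :
    (Fin n → Fin n → ℂ) →ₗ[ℂ] (Fin n → Fin n → ℂ) where
  toFun x := (x i j + x j k + x k i) •
    (a k • F2 n i j + a i • F2 n j k + a j • F2 n k i)
  map_add' x y := by
    simp only [Pi.add_apply]
    rw [← add_smul]
    congr 1
    ring
  map_smul' c x := by
    simp only [Pi.smul_apply, smul_eq_mul, RingHom.id_apply]
    rw [smul_smul]
    congr 1
    ring

/-- The operator `K_i(z) = ∑_{{j,k} ⊆ {1,…,n}∖{i}} (d_{j,k}/f_{i,j,k}(z)) L_{i,j,k}`,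
the sum over unordered pairs `{j,k}` realized by `j < k`. -/
noncomputable def K2 {n : ℕ} (a : Fin n → ℂ) (b : Fin n → Fin 2 → ℂ) (z : Fin n → ℂ)
    (i : Fin n) : (Fin n → Fin n → ℂ) →ₗ[ℂ] (Fin n → Fin n → ℂ) :=
  ∑ j ∈ Finset.univ.erase i, ∑ k ∈ Finset.univ.filter (fun k => j < k ∧ k ≠ i),
    (dd2 b j k / ff2 b z i j k) • L2 a i j k

/-- The period map
`q(z) = (1/|a|²) ∑'_{i<j, m∉{i,j}} (f_{i,j,m}(z)²/(d_{i,j} d_{j,m} d_{m,i})) v_{i,j}`. -/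
noncomputable def qmap2 {n : ℕ} (a : Fin n → ℂ) (b : Fin n → Fin 2 → ℂ) (m : Fin n)
    (z : Fin n → ℂ) : Fin n → Fin n → ℂ :=
  ((∑ j, a j) ^ 2)⁻¹ • ∑ i, ∑ j ∈ Finset.univ.filter (fun j => i < j ∧ i ≠ m ∧ j ≠ m),
    (ff2 b z i j m ^ 2 / (dd2 b i j * dd2 b j m * dd2 b m i)) • vv2 a i j

section Vectors
variable {n : ℕ}

lemma dd2_self (b : Fin n → Fin 2 → ℂ) (i : Fin n) : dd2 b i i = 0 := by
  simp only [dd2]; ring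

lemma F2_comm (i j : Fin n) : F2 n j i = -F2 n i j := by
  funext p r; simp only [F2, Pi.neg_apply]; ring

lemma F2_self (i : Fin n) : F2 n i i = 0 := by
  funext p r; simp [F2]

lemma sum_F2_apply (i p r : Fin n) :
    (∑ k, F2 n i k) p r = (if p = i then 1 else 0) - (if r = i then 1 else 0) := by
  simp [Finset.sum_apply, F2, ite_and, Finset.sum_sub_distrib, eq_comm]

lemma sum_smul_F2_apply (c : Fin n → Fin n → ℂ) (α β : Fin n) :
    (∑ i, ∑ j, c i j • F2 n i j) α β = c α β - c β α := by
  simp only [Finset.sum_apply, Pi.smul_apply, F2, smul_eq_mul, mul_sub, mul_ite, mul_one,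
    mul_zero, Finset.sum_sub_distrib, ite_and]
  simp

variable (a : Fin n → ℂ)

lemma vv2_eq (i j : Fin n) :
    vv2 a i j = F2 n i j - (a j / ∑ t, a t) • ∑ k, F2 n i k
      + (a i / ∑ t, a t) • ∑ k, F2 n j k := by
  rcases eq_or_ne i j with rfl | h
  · rw [vv2, if_pos rfl, F2_self]; module
  · rw [vv2, if_neg h, Finset.sum_congr rfl fun l _ => F2_comm j l, Finset.sum_neg_distrib]
    module

lemma vv2_comm (i j : Fin n) : vv2 a j i = -vv2 a i j := by
  rw [vv2_eq, vv2_eq, F2_comm i j]; module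

lemma vv2_self (i : Fin n) : vv2 a i i = 0 := by
  rw [vv2, if_pos rfl]

lemma sum_vv2 (hA : ∑ t, a t ≠ 0) (i : Fin n) : ∑ k, vv2 a i k = 0 := by
  have hrows : ∑ j : Fin n, ∑ k : Fin n, F2 n j k = 0 := by
    funext p r
    rw [Finset.sum_apply, Finset.sum_apply]
    simp [sum_F2_apply]
  simp only [vv2_eq, Finset.sum_add_distrib, Finset.sum_sub_distrib, ← Finset.smul_sum,
    ← Finset.sum_smul, ← Finset.sum_div, div_self hA, one_smul, hrows, smul_zero, add_zero,
    sub_self]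

lemma sum_vv2_left (hA : ∑ t, a t ≠ 0) (k : Fin n) : ∑ j, vv2 a j k = 0 := by
  rw [Finset.sum_congr rfl fun j _ => vv2_comm a k j, Finset.sum_neg_distrib, sum_vv2 a hA,
    neg_zero]

/-- The common image of `F_{i,j}`, `F_{j,k}`, `F_{k,i}` under `L_{i,j,k}`. -/
noncomputable def triVec (i j k : Fin n) : Fin n → Fin n → ℂ :=
  a k • F2 n i j + a i • F2 n j k + a j • F2 n k i

/-- `L_{i,j,k}` factors through this linear form. -/
def cycSum (i j k : Fin n) : (Fin n → Fin n → ℂ) →ₗ[ℂ] ℂ where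
  toFun x := x i j + x j k + x k i
  map_add' x y := by simp only [Pi.add_apply]; ring
  map_smul' c x := by simp only [Pi.smul_apply, smul_eq_mul, RingHom.id_apply]; ring

lemma L2_apply (i j k : Fin n) (x : Fin n → Fin n → ℂ) :
    L2 a i j k x = cycSum i j k x • triVec a i j k := rfl

lemma triVec_eq (i j k : Fin n) :
    triVec a i j k = a k • vv2 a i j + a i • vv2 a j k + a j • vv2 a k i := by
  rw [triVec, vv2_eq, vv2_eq, vv2_eq]
  match_scalars <;> ring

lemma triVec_comm (i j k : Fin n) : triVec a i k j = -triVec a i j k := by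
  rw [triVec, triVec, F2_comm i k, F2_comm k j, F2_comm j i]; module

lemma triVec_self_left (i k : Fin n) : triVec a i i k = 0 := by
  rw [triVec, F2_self, F2_comm k i]; module

lemma triVec_self_right (i j : Fin n) : triVec a i j i = 0 := by
  rw [triVec, F2_self, F2_comm j i]; module

lemma cycSum_vv2 (i j α β γ : Fin n) :
    cycSum α β γ (vv2 a i j) = cycSum α β γ (F2 n i j) := by
  simp only [cycSum, LinearMap.coe_mk, AddHom.coe_mk, vv2_eq, Pi.add_apply, Pi.sub_apply,
    Pi.smul_apply, smul_eq_mul, sum_F2_apply]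
  ring

end Vectors

section Coefficients
variable {n : ℕ} (b : Fin n → Fin 2 → ℂ) (z : Fin n → ℂ)

/-- The coefficient `c_{i,j}` of `v_{i,j}` in `q`. Through `x / 0 = 0` it vanishes unless `i`, `j`,
`m` are distinct, so `q` is a sum over all ordered pairs. -/
noncomputable def qCoeff (m i j : Fin n) : ℂ :=
  ff2 b z i j m ^ 2 / (dd2 b i j * dd2 b j m * dd2 b m i)

/-- The coefficient `ψ_{j,k}` (for fixed `l`); through `x / 0 = 0` it vanishes when `j = l` or
`k = l`. -/
noncomputable def kCoeff (l j k : Fin n) : ℂ :=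
  ff2 b z l j k / (dd2 b l j * dd2 b k l)

lemma ff2_self_left (i k : Fin n) : ff2 b z i i k = 0 := by
  simp only [ff2, dd2]; ring

lemma ff2_self_right (i j : Fin n) : ff2 b z i j j = 0 := by
  simp only [ff2, dd2]; ring

lemma ff2_self_outer (i j : Fin n) : ff2 b z i j i = 0 := by
  simp only [ff2, dd2]; ring

lemma qCoeff_comm (m i j : Fin n) : qCoeff b z m j i = -qCoeff b z m i j := by
  rw [qCoeff, qCoeff, ← div_neg]
  congr 1 <;> simp only [ff2, dd2] <;> ring

lemma qCoeff_of_left_eq (m j : Fin n) : qCoeff b z m m j = 0 := by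
  simp [qCoeff, dd2_self]

lemma qCoeff_of_right_eq (m i : Fin n) : qCoeff b z m i m = 0 := by
  simp [qCoeff, dd2_self]

lemma kCoeff_comm (l j k : Fin n) : kCoeff b z l k j = -kCoeff b z l j k := by
  rw [kCoeff, kCoeff, ← neg_div]
  congr 1 <;> simp only [ff2, dd2] <;> ring

lemma kCoeff_self_left (l k : Fin n) : kCoeff b z l l k = 0 := by
  simp [kCoeff, dd2_self]

lemma kCoeff_self_right (l j : Fin n) : kCoeff b z l j l = 0 := by
  simp [kCoeff, dd2_self]

variable {b}

/-- Summing the coefficients of `q` around a triangle eliminates the base point `m`. -/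
lemma qCoeff_cycle (hd : ∀ i j : Fin n, i ≠ j → dd2 b i j ≠ 0) (m : Fin n) {l j k : Fin n}
    (hlj : l ≠ j) (hjk : j ≠ k) (hkl : k ≠ l) :
    qCoeff b z m l j + qCoeff b z m j k + qCoeff b z m k l =
      ff2 b z l j k ^ 2 / (dd2 b l j * dd2 b j k * dd2 b k l) := by
  by_cases hm : m = l ∨ m = j ∨ m = k
  · rcases hm with rfl | rfl | rfl <;> (simp only [qCoeff, ff2, dd2]; ring)
  rw [not_or, not_or] at hm
  obtain ⟨hml, hmj, hmk⟩ := hm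
  have := hd _ _ hlj; have := hd _ _ hjk; have := hd _ _ hkl
  have := hd _ _ hml; have := hd _ _ hmj; have := hd _ _ hmk
  have := hd _ _ (Ne.symm hml); have := hd _ _ (Ne.symm hmj); have := hd _ _ (Ne.symm hmk)
  simp only [qCoeff]
  field_simp
  simp only [ff2, dd2]
  ring

lemma div_ff2_mul_cycle (hd : ∀ i j : Fin n, i ≠ j → dd2 b i j ≠ 0) (m l j k : Fin n) :
    dd2 b j k / ff2 b z l j k * (qCoeff b z m l j + qCoeff b z m j k + qCoeff b z m k l) =
      kCoeff b z l j k := by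
  rcases eq_or_ne l j with rfl | hlj
  · simp [kCoeff_self_left, ff2_self_left]
  rcases eq_or_ne k l with rfl | hkl
  · simp [kCoeff_self_right, ff2_self_outer]
  rcases eq_or_ne j k with rfl | hjk
  · simp [dd2_self, kCoeff, ff2_self_right]
  rw [qCoeff_cycle z hd m hlj hjk hkl, kCoeff]
  have := hd _ _ hjk
  rcases eq_or_ne (ff2 b z l j k) 0 with hf | hf
  · simp [hf]
  field_simp

lemma kCoeff_eq_sub (hd : ∀ i j : Fin n, i ≠ j → dd2 b i j ≠ 0) {l p : Fin n} (hp : p ≠ l)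
    (j k : Fin n) :
    kCoeff b z l j k = kCoeff b z l j p - kCoeff b z l k p
      + (if j = l then kCoeff b z l k p else 0) - (if k = l then kCoeff b z l j p else 0) := by
  rcases eq_or_ne j l with rfl | hj
  · simp [kCoeff_self_left]
  rcases eq_or_ne k l with rfl | hk
  · simp [kCoeff_self_left, kCoeff_self_right]
  have := hd _ _ hj; have := hd _ _ hk; have := hd _ _ hp
  have := hd _ _ (Ne.symm hj); have := hd _ _ (Ne.symm hk)
  simp only [hj, hk, if_false, add_zero, sub_zero, kCoeff]
  field_simp
  simp only [ff2, dd2]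
  ring

lemma ff2_mul_ff2_single_div_of_ne (hd : ∀ i j : Fin n, i ≠ j → dd2 b i j ≠ 0) {l m : Fin n}
    (hlm : l ≠ m) (i j : Fin n) :
    ff2 b z i j m * ff2 b (Pi.single l 1) i j m / (dd2 b i j * dd2 b j m * dd2 b m i) =
      (if i = l then kCoeff b z l j m else 0) - (if j = l then kCoeff b z l i m else 0) := by
  have hml : Pi.single (M := fun _ => ℂ) l 1 m = 0 := Pi.single_eq_of_ne hlm.symm 1
  rcases eq_or_ne i l with rfl | hi <;> rcases eq_or_ne j i with rfl | hj
  · simp [dd2_self]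
  · rcases eq_or_ne j m with rfl | hjm
    · simp [dd2_self, kCoeff, ff2_self_right]
    have := hd _ _ hj.symm; have := hd _ _ hjm; have := hd _ _ hlm.symm
    simp only [ff2, hml, Pi.single_eq_same, Pi.single_eq_of_ne hj, kCoeff, if_pos, if_neg hj]
    field_simp
    ring
  · simp [dd2_self]
  · rcases eq_or_ne j l with rfl | hjl
    · rcases eq_or_ne i m with rfl | him
      · simp [dd2_self, kCoeff, ff2_self_right]
      have := hd _ _ hj; have := hd _ _ him.symm; have := hd _ _ hlm
      have := hd _ _ hj.symm; have := hd _ _ hlm.symm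
      simp only [ff2, hml, Pi.single_eq_same, Pi.single_eq_of_ne hi, kCoeff, if_pos, if_neg hi]
      field_simp
      simp only [dd2]
      ring
    · simp [ff2, hml, hi, hjl]

lemma ff2_mul_ff2_single_div_self (hd : ∀ i j : Fin n, i ≠ j → dd2 b i j ≠ 0) (m i j : Fin n) :
    ff2 b z i j m * ff2 b (Pi.single m 1) i j m / (dd2 b i j * dd2 b j m * dd2 b m i) =
      kCoeff b z m i j := by
  rcases eq_or_ne i m with rfl | him
  · simp [dd2_self, kCoeff_self_left]
  rcases eq_or_ne j m with rfl | hjm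
  · simp [dd2_self, kCoeff_self_right]
  rcases eq_or_ne i j with rfl | hij
  · simp [dd2_self, kCoeff, ff2_self_right]
  have := hd _ _ hij; have := hd _ _ hjm; have := hd _ _ him.symm
  simp only [ff2, Pi.single_eq_same, Pi.single_eq_of_ne him, Pi.single_eq_of_ne hjm, kCoeff]
  field_simp
  ring

end Coefficients


lemma two_nsmul_sum_filter_lt {ι M : Type*} [Fintype ι] [LinearOrder ι] [AddCommMonoid M]
    (g : ι → ι → M) (hg : ∀ i j, g j i = g i j) (hdiag : ∀ i, g i i = 0) :
    2 • ∑ i, ∑ j ∈ univ.filter (i < ·), g i j = ∑ i, ∑ j, g i j := by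
  have hsplit : ∀ i j, g i j = (if i < j then g i j else 0) + (if j < i then g j i else 0) := by
    intro i j
    rcases lt_trichotomy i j with h | rfl | h
    · simp [h, h.not_gt]
    · simp [hdiag]
    · simp [h, h.not_gt, hg]
  calc 2 • ∑ i, ∑ j ∈ univ.filter (i < ·), g i j
      = ∑ i, ∑ j, (if i < j then g i j else 0) + ∑ i, ∑ j, (if j < i then g j i else 0) := by
        rw [Finset.sum_comm (f := fun i j => if j < i then g j i else 0), two_nsmul]
        simp only [Finset.sum_filter]
    _ = ∑ i, ∑ j, g i j := by
        simp only [← Finset.sum_add_distrib, ← hsplit]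

section Sums
variable {n : ℕ} (a : Fin n → ℂ) (φ : Fin n → ℂ)

lemma sum_sum_sub_smul_vv2 (hA : ∑ t, a t ≠ 0) :
    ∑ j, ∑ k, (φ j - φ k) • vv2 a j k = 0 := by
  have hrow : ∑ j, ∑ k, φ j • vv2 a j k = 0 := by
    simp [← Finset.smul_sum, sum_vv2 a hA]
  have hcol : ∑ j, ∑ k, φ k • vv2 a j k = 0 := by
    rw [Finset.sum_comm]; simp [← Finset.smul_sum, sum_vv2_left a hA]
  simp only [sub_smul, Finset.sum_sub_distrib, hrow, hcol, sub_zero]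

lemma sum_sum_ite_smul_vv2 (l : Fin n) :
    ∑ j, ∑ k, ((if j = l then φ k else 0) - (if k = l then φ j else 0)) • vv2 a j k =
      (2 : ℂ) • ∑ k, φ k • vv2 a l k := by
  have hrow : ∑ j, ∑ k, (if j = l then φ k else 0) • vv2 a j k = ∑ k, φ k • vv2 a l k := by
    rw [Finset.sum_comm]; simp [ite_smul]
  have hcol : ∑ j, ∑ k, (if k = l then φ j else 0) • vv2 a j k = -∑ k, φ k • vv2 a l k := by
    simp [ite_smul, vv2_comm a l]
  rw [Finset.sum_congr rfl fun j _ => Finset.sum_congr rfl fun k _ => sub_smul _ _ _]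
  simp only [Finset.sum_sub_distrib, hrow, hcol, sub_neg_eq_add, two_smul]

lemma sum_sum_sub_mul_smul_vv2 (hA : ∑ t, a t ≠ 0) (l : Fin n) :
    ∑ j, ∑ k, ((φ j - φ k) * a k) • vv2 a l j = (∑ t, a t) • ∑ j, φ j • vv2 a l j := by
  have hinner : ∀ j, ∑ k, (φ j - φ k) * a k = (∑ t, a t) * φ j - ∑ k, φ k * a k := by
    intro j
    simp only [sub_mul, Finset.sum_sub_distrib, ← Finset.mul_sum]
    ring
  calc ∑ j, ∑ k, ((φ j - φ k) * a k) • vv2 a l j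
      = ∑ j, ((∑ t, a t) * φ j - ∑ k, φ k * a k) • vv2 a l j := by
        simp only [← Finset.sum_smul, hinner]
    _ = (∑ t, a t) • ∑ j, φ j • vv2 a l j := by
        rw [Finset.sum_congr rfl fun j _ => sub_smul _ _ _, Finset.sum_sub_distrib,
          ← Finset.smul_sum, sum_vv2 a hA, smul_zero, sub_zero]
        simp only [mul_smul, Finset.smul_sum]

lemma sum_sum_sub_smul_triVec (hA : ∑ t, a t ≠ 0) (l : Fin n) :
    ∑ j, ∑ k, (φ j - φ k) • triVec a l j k = (2 * ∑ t, a t) • ∑ j, φ j • vv2 a l j := by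
  have hswap : ∑ j, ∑ k, ((φ j - φ k) * a j) • vv2 a k l =
      ∑ j, ∑ k, ((φ j - φ k) * a k) • vv2 a l j := by
    rw [Finset.sum_comm]
    refine Finset.sum_congr rfl fun j _ => Finset.sum_congr rfl fun k _ => ?_
    rw [vv2_comm a l j, smul_neg, ← neg_smul]
    ring_nf
  calc ∑ j, ∑ k, (φ j - φ k) • triVec a l j k
      = ∑ j, ∑ k, (((φ j - φ k) * a k) • vv2 a l j + a l • ((φ j - φ k) • vv2 a j k)
          + ((φ j - φ k) * a j) • vv2 a k l) := by
        simp only [triVec_eq]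
        congr! 2
        module
    _ = (2 * ∑ t, a t) • ∑ j, φ j • vv2 a l j := by
        simp only [Finset.sum_add_distrib, ← Finset.smul_sum, hswap,
          sum_sum_sub_smul_vv2 a φ hA, sum_sum_sub_mul_smul_vv2 a φ hA]
        module

end Sums

lemma hasFDerivAt_sq_div {𝕜 E : Type*} [NontriviallyNormedField 𝕜] [NormedAddCommGroup E]
    [NormedSpace 𝕜 E] (g : E →L[𝕜] 𝕜) (D : 𝕜) (z : E) :
    HasFDerivAt (fun z => g z ^ 2 / D) ((2 * g z / D) • g) z := by
  simp only [div_eq_mul_inv]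
  refine ((g.hasFDerivAt.pow 2).mul_const D⁻¹).congr_fderiv ?_
  ext w
  simp
  ring

section Period
variable {n : ℕ} (a : Fin n → ℂ) (b : Fin n → Fin 2 → ℂ)

noncomputable def ff2L (i j k : Fin n) : (Fin n → ℂ) →L[ℂ] ℂ :=
  dd2 b j k • ContinuousLinearMap.proj i + dd2 b k i • ContinuousLinearMap.proj j
    + dd2 b i j • ContinuousLinearMap.proj k

lemma ff2L_apply (i j k : Fin n) (w : Fin n → ℂ) : ff2L b i j k w = ff2 b w i j k := by
  simp [ff2L, ff2]

lemma qmap2_eq (m : Fin n) (z : Fin n → ℂ) :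
    qmap2 a b m z = (2 * (∑ t, a t) ^ 2)⁻¹ • ∑ i, ∑ j, qCoeff b z m i j • vv2 a i j := by
  have hfilter : ∀ i, ∑ j ∈ univ.filter (fun j => i < j ∧ i ≠ m ∧ j ≠ m),
      qCoeff b z m i j • vv2 a i j = ∑ j ∈ univ.filter (i < ·), qCoeff b z m i j • vv2 a i j := by
    intro i
    rw [← Finset.filter_filter, Finset.sum_filter_of_ne]
    intro j _ hj
    refine ⟨fun him => hj ?_, fun hjm => hj ?_⟩
    · rw [him, qCoeff_of_left_eq, zero_smul]
    · rw [hjm, qCoeff_of_right_eq, zero_smul]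
  have hhalf := two_nsmul_sum_filter_lt (fun i j => qCoeff b z m i j • vv2 a i j)
    (fun i j => by rw [qCoeff_comm, vv2_comm, neg_smul, smul_neg, neg_neg])
    (fun i => by simp only [vv2_self, smul_zero])
  rw [qmap2, ← hhalf, ← Finset.sum_congr rfl fun i _ => hfilter i]
  unfold qCoeff
  rw [two_nsmul, ← two_smul ℂ, smul_smul, mul_inv, mul_comm (2 : ℂ)⁻¹, mul_assoc,
    inv_mul_cancel₀ two_ne_zero, mul_one]

lemma fderiv_qmap2_apply (m : Fin n) (z w : Fin n → ℂ) :
    fderiv ℂ (qmap2 a b m) z w = ((∑ t, a t) ^ 2)⁻¹ • ∑ i, ∑ j,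
      (ff2 b z i j m * ff2 b w i j m / (dd2 b i j * dd2 b j m * dd2 b m i)) • vv2 a i j := by
  have hcoeff : ∀ i j, HasFDerivAt (fun z => qCoeff b z m i j)
      ((2 * ff2 b z i j m / (dd2 b i j * dd2 b j m * dd2 b m i)) • ff2L b i j m) z := by
    intro i j
    simpa only [ff2L_apply, qCoeff] using hasFDerivAt_sq_div (ff2L b i j m) _ z
  have hq := (HasFDerivAt.fun_sum (u := univ) fun i _ => HasFDerivAt.fun_sum (u := univ) fun j _ =>
    (hcoeff i j).smul_const (vv2 a i j)).fun_const_smul (2 * (∑ t, a t) ^ 2)⁻¹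
  rw [show qmap2 a b m = _ from funext (qmap2_eq a b m), hq.fderiv]
  simp only [FunLike.coe_smul, Pi.smul_apply, FunLike.coe_sum, Finset.sum_apply,
    ContinuousLinearMap.smulRight_apply, ff2L_apply, Finset.smul_sum, smul_smul, smul_eq_mul]
  refine Finset.sum_congr rfl fun i _ => Finset.sum_congr rfl fun j _ => ?_
  congr 1
  ring

lemma cycSum_qmap2 (m : Fin n) (z : Fin n → ℂ) (α β γ : Fin n) :
    cycSum α β γ (qmap2 a b m z) = ((∑ t, a t) ^ 2)⁻¹ *
      (qCoeff b z m α β + qCoeff b z m β γ + qCoeff b z m γ α) := by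
  have hF : ∑ i, ∑ j, qCoeff b z m i j * cycSum α β γ (F2 n i j) =
      cycSum α β γ (∑ i, ∑ j, qCoeff b z m i j • F2 n i j) := by
    simp only [map_sum, map_smul, smul_eq_mul]
  rw [qmap2_eq, map_smul]
  simp only [map_sum, map_smul, cycSum_vv2, smul_eq_mul]
  rw [hF]
  simp only [cycSum, LinearMap.coe_mk, AddHom.coe_mk, sum_smul_F2_apply]
  rw [qCoeff_comm b z m β α, qCoeff_comm b z m γ β, qCoeff_comm b z m α γ]
  ring

end Period

section Flatness
variable {n : ℕ} {a : Fin n → ℂ} {b : Fin n → Fin 2 → ℂ}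

lemma kCoeff_smul_triVec (z : Fin n → ℂ) (hd : ∀ i j : Fin n, i ≠ j → dd2 b i j ≠ 0)
    {l p : Fin n} (hp : p ≠ l) (j k : Fin n) :
    kCoeff b z l j k • triVec a l j k =
      (kCoeff b z l j p - kCoeff b z l k p) • triVec a l j k := by
  rcases eq_or_ne j l with rfl | hj
  · simp [triVec_self_left]
  rcases eq_or_ne k l with rfl | hk
  · simp [triVec_self_right]
  rw [kCoeff_eq_sub z hd hp j k, if_neg hj, if_neg hk, add_zero, sub_zero]

lemma K2_apply_qmap2_eq_sum (hd : ∀ i j : Fin n, i ≠ j → dd2 b i j ≠ 0) (m : Fin n)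
    (z : Fin n → ℂ) (l : Fin n) :
    K2 a b z l (qmap2 a b m z) =
      (2 * (∑ t, a t) ^ 2)⁻¹ • ∑ j, ∑ k, kCoeff b z l j k • triVec a l j k := by
  have hterm : ∀ j k, (dd2 b j k / ff2 b z l j k) • L2 a l j k (qmap2 a b m z) =
      ((∑ t, a t) ^ 2)⁻¹ • (kCoeff b z l j k • triVec a l j k) := by
    intro j k
    rw [L2_apply, cycSum_qmap2, smul_smul, smul_smul, ← div_ff2_mul_cycle z hd m l j k]
    congr 1
    ring
  have hrow : ∑ k ∈ univ.filter (fun k => l < k ∧ k ≠ l), kCoeff b z l l k • triVec a l l k = 0 :=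
    Finset.sum_eq_zero fun k _ => by rw [kCoeff_self_left, zero_smul]
  have hcol : ∀ j, ∑ k ∈ univ.filter (fun k => j < k ∧ k ≠ l), kCoeff b z l j k • triVec a l j k
      = ∑ k ∈ univ.filter (j < ·), kCoeff b z l j k • triVec a l j k := by
    intro j
    rw [← Finset.filter_filter, Finset.sum_filter_of_ne]
    rintro k - hk rfl
    exact hk (by rw [kCoeff_self_right, zero_smul])
  have hhalf := two_nsmul_sum_filter_lt (fun j k => kCoeff b z l j k • triVec a l j k)
    (fun j k => by rw [kCoeff_comm, triVec_comm, neg_smul, smul_neg, neg_neg])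
    (fun j => by rw [kCoeff, ff2_self_right, zero_div, zero_smul])
  simp only [K2, LinearMap.coe_sum, Finset.sum_apply, LinearMap.smul_apply, hterm,
    ← Finset.smul_sum]
  rw [Finset.sum_erase (f := fun j => ∑ k ∈ univ.filter (fun k => j < k ∧ k ≠ l),
      kCoeff b z l j k • triVec a l j k) univ hrow, Finset.sum_congr rfl fun j _ => hcol j, ← hhalf, two_nsmul,
    ← two_smul ℂ, smul_smul, mul_inv, mul_comm (2 : ℂ)⁻¹, mul_assoc,
    inv_mul_cancel₀ two_ne_zero, mul_one]

lemma K2_apply_qmap2 (hd : ∀ i j : Fin n, i ≠ j → dd2 b i j ≠ 0) (hA : ∑ t, a t ≠ 0)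
    (m : Fin n) (z : Fin n → ℂ) {l p : Fin n} (hp : p ≠ l) :
    K2 a b z l (qmap2 a b m z) = (∑ t, a t)⁻¹ • ∑ j, kCoeff b z l j p • vv2 a l j := by
  rw [K2_apply_qmap2_eq_sum hd, Finset.sum_congr rfl fun j _ => Finset.sum_congr rfl fun k _ =>
    kCoeff_smul_triVec z hd hp j k, sum_sum_sub_smul_triVec a _ hA, smul_smul]
  congr 1
  field_simp

lemma sum_ff2_mul_ff2_single_smul_of_ne (hd : ∀ i j : Fin n, i ≠ j → dd2 b i j ≠ 0)
    (z : Fin n → ℂ) {l m : Fin n} (hlm : l ≠ m) :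
    ∑ i, ∑ j, (ff2 b z i j m * ff2 b (Pi.single l 1) i j m /
        (dd2 b i j * dd2 b j m * dd2 b m i)) • vv2 a i j =
      (2 : ℂ) • ∑ j, kCoeff b z l j m • vv2 a l j := by
  simp only [ff2_mul_ff2_single_div_of_ne z hd hlm]
  exact sum_sum_ite_smul_vv2 a _ l

lemma sum_ff2_mul_ff2_single_smul_self (hd : ∀ i j : Fin n, i ≠ j → dd2 b i j ≠ 0)
    (hA : ∑ t, a t ≠ 0) (z : Fin n → ℂ) {m p : Fin n} (hp : p ≠ m) :
    ∑ i, ∑ j, (ff2 b z i j m * ff2 b (Pi.single m 1) i j m /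
        (dd2 b i j * dd2 b j m * dd2 b m i)) • vv2 a i j =
      (2 : ℂ) • ∑ j, kCoeff b z m j p • vv2 a m j := by
  calc _ = ∑ i, ∑ j, kCoeff b z m i j • vv2 a i j := by
        simp only [ff2_mul_ff2_single_div_self z hd]
    _ = ∑ i, ∑ j, ((kCoeff b z m i p - kCoeff b z m j p) • vv2 a i j
          + ((if i = m then kCoeff b z m j p else 0)
            - (if j = m then kCoeff b z m i p else 0)) • vv2 a i j) :=
        Finset.sum_congr rfl fun i _ => Finset.sum_congr rfl fun j _ => by
          rw [kCoeff_eq_sub z hd hp i j, add_sub_assoc, add_smul]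
    _ = _ := by
        simp only [Finset.sum_add_distrib, sum_sum_sub_smul_vv2 a _ hA, zero_add,
          sum_sum_ite_smul_vv2]

end Flatness

theorem stmt_14_general (n : ℕ) (hn : 3 ≤ n) (b : Fin n → Fin 2 → ℂ)
    (hd : ∀ i j : Fin n, i ≠ j → dd2 b i j ≠ 0)
    (a : Fin n → ℂ) (hA : (∑ j, a j) ≠ 0)
    (m : Fin n) (z : Fin n → ℂ)
    (l : Fin n) :
    ((∑ j, a j) / 2) • fderiv ℂ (qmap2 a b m) z (Pi.single l 1) =
      K2 a b z l (qmap2 a b m z) := by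
  obtain ⟨p, hp, hsum⟩ : ∃ p ≠ l, ∑ i, ∑ j, (ff2 b z i j m * ff2 b (Pi.single l 1) i j m /
      (dd2 b i j * dd2 b j m * dd2 b m i)) • vv2 a i j =
        (2 : ℂ) • ∑ j, kCoeff b z l j p • vv2 a l j := by
    rcases eq_or_ne l m with rfl | hlm
    · have : Nontrivial (Fin n) := Fin.nontrivial_iff_two_le.mpr (by omega)
      obtain ⟨p, hp⟩ := exists_ne l
      exact ⟨p, hp, sum_ff2_mul_ff2_single_smul_self hd hA z hp⟩
    · exact ⟨m, hlm.symm, sum_ff2_mul_ff2_single_smul_of_ne hd z hlm⟩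
  rw [fderiv_qmap2_apply, hsum, K2_apply_qmap2 hd hA m z hp, smul_smul, smul_smul]
  congr 1
  field_simp

/-- For every `z` with all `f_{i,j,k}(z) ≠ 0` and every `ℓ`:
`(|a|/2) ∂q/∂z_ℓ(z) = K_ℓ(z) q(z)`; thus `q` is a flat section of the Gauss–Manin
connection at `κ = |a|/2` (the bundle of conformal blocks at level `|a|/2`). -/
theorem stmt_14 (n : ℕ) (hn : 3 ≤ n) (b : Fin n → Fin 2 → ℂ)
    (hd : ∀ i j : Fin n, i ≠ j → dd2 b i j ≠ 0)
    (a : Fin n → ℂ) (ha : ∀ j, a j ≠ 0) (hA : (∑ j, a j) ≠ 0)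
    (m : Fin n) (z : Fin n → ℂ)
    (hz : ∀ i j k : Fin n, i ≠ j → i ≠ k → j ≠ k → ff2 b z i j k ≠ 0)
    (l : Fin n) :
    ((∑ j, a j) / 2) • fderiv ℂ (qmap2 a b m) z (Pi.single l 1) =
      K2 a b z l (qmap2 a b m z) :=
  stmt_14_general n hn b hd a hA m z l
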